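/- Let n = 2m² for a positive integer m. Then the equi-n-square S obtained from the paired m×m box construction has no transversal of size greater than n − m/2; equivalently, every transversal of S omits at least m/2 = √n/(2√2) symbols. -/

import Mathlib

/-- The box of side length `m` containing a cell (0-indexed). -/
def boxOf (m : ℕ) (p : ℕ × ℕ) : ℕ × ℕ := (p.1 / m, p.2 / m)

/-- Two boxes (0-indexed) are paired: diagonal boxes `A_{2k,2k}` and `A_{2k+1,2k+1}`,
and off-diagonal boxes `A_{i,j}` and `A_{j,i}` (`i ≠ j`). -/
def boxPaired (b b' : ℕ × ℕ) : Prop :=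
  (b.1 = b.2 ∧ b'.1 = b'.2 ∧ b.1 / 2 = b'.1 / 2) ∨
  (b.1 ≠ b.2 ∧ (b' = b ∨ b' = (b.2, b.1)))

/-- A transversal: a set of cells sharing no row, column or symbol. -/
def IsTransversal {n : ℕ} (S : Fin n × Fin n → Fin n) (T : Finset (Fin n × Fin n)) : Prop :=
  ∀ p ∈ T, ∀ q ∈ T, p ≠ q → p.1 ≠ q.1 ∧ p.2 ≠ q.2 ∧ S p ≠ S q

/-!
Let `N i j` be the number of cells of a transversal `T` in the box `A_{i,j}`, and `R_i`, `C_i`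
the numbers of cells of `T` in the `i`-th band of rows and of columns. Each band holds at most
`m` cells of `T`, and two paired boxes hold at most one cell of `T` between them. If `A_{i,i}`
is empty, the two bands `i` meet `T` only inside the `2m - 1` transposed pairs
`A_{i,j}, A_{j,i}`; otherwise they hold at most `2m` cells. Either way
`R_i + C_i + 1 ≤ 2m + N i i`, and summing over `i` gives `2|T| + 2m ≤ 4m² + ∑ N i i ≤ 4m² + m`,
since the diagonal boxes are paired two by two.
-/

open Finset

lemma sum_range_two_mul_le_of_add_le_one (M : ℕ) (f : ℕ → ℕ)
    (h : ∀ k, f (2 * k) + f (2 * k + 1) ≤ 1) : ∑ i ∈ range (2 * M), f i ≤ M := by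
  induction M with
  | zero => simp
  | succ M ih =>
    rw [Nat.mul_succ, sum_range_succ, sum_range_succ]
    have := h M
    omega

section BoxMatrix

variable {m : ℕ} {N : ℕ → ℕ → ℕ}

lemma rowSum_add_colSum_add_one_le {i : ℕ} (hi : i < 2 * m)
    (hrow : ∑ j ∈ range (2 * m), N i j ≤ m) (hcol : ∑ j ∈ range (2 * m), N j i ≤ m)
    (hoff : ∀ j, j ≠ i → N i j + N j i ≤ 1) :
    ∑ j ∈ range (2 * m), N i j + ∑ j ∈ range (2 * m), N j i + 1 ≤ 2 * m + N i i := by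
  rcases Nat.eq_zero_or_pos (N i i) with hii | hii
  · have hi' : i ∈ range (2 * m) := mem_range.2 hi
    have hsum : ∑ j ∈ range (2 * m), (N i j + N j i) ≤ 2 * m - 1 := by
      rw [← sum_erase (a := i) (f := fun j => N i j + N j i) _ (by simp [hii])]
      calc ∑ j ∈ (range (2 * m)).erase i, (N i j + N j i)
          ≤ #((range (2 * m)).erase i) • 1 :=
            sum_le_card_nsmul _ _ _ fun j hj => hoff j (ne_of_mem_erase hj)
        _ = 2 * m - 1 := by rw [card_erase_of_mem hi', card_range, smul_eq_mul, mul_one]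
    rw [sum_add_distrib] at hsum
    omega
  · omega

theorem two_mul_sum_add_le
    (hrow : ∀ i, ∑ j ∈ range (2 * m), N i j ≤ m) (hcol : ∀ j, ∑ i ∈ range (2 * m), N i j ≤ m)
    (hoff : ∀ i j, i ≠ j → N i j + N j i ≤ 1)
    (hdiag : ∀ k, N (2 * k) (2 * k) + N (2 * k + 1) (2 * k + 1) ≤ 1) :
    2 * ∑ i ∈ range (2 * m), ∑ j ∈ range (2 * m), N i j + m ≤ 4 * m ^ 2 := by
  have hbands : ∑ i ∈ range (2 * m),
      (∑ j ∈ range (2 * m), N i j + ∑ j ∈ range (2 * m), N j i + 1) ≤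
      ∑ i ∈ range (2 * m), (2 * m + N i i) :=
    sum_le_sum fun i hi => rowSum_add_colSum_add_one_le (mem_range.1 hi) (hrow i) (hcol i)
      fun j hj => hoff i j hj.symm
  have hdiagSum : ∑ i ∈ range (2 * m), N i i ≤ m :=
    sum_range_two_mul_le_of_add_le_one m (fun i => N i i) hdiag
  have htranspose : ∑ i ∈ range (2 * m), ∑ j ∈ range (2 * m), N j i =
      ∑ i ∈ range (2 * m), ∑ j ∈ range (2 * m), N i j := sum_comm
  rw [sum_add_distrib, sum_add_distrib, sum_add_distrib, htranspose] at hbands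
  simp only [sum_const, card_range, smul_eq_mul, mul_one] at hbands
  nlinarith

end BoxMatrix

lemma card_filter_div_eq_le {α : Type*} {s : Finset α} {f : α → ℕ} (hf : Set.InjOn f s)
    {m : ℕ} (hm : 0 < m) (i : ℕ) : #{x ∈ s | f x / m = i} ≤ m :=
  calc #{x ∈ s | f x / m = i}
      ≤ #(Ico (i * m) (i * m + m)) := by
        refine card_le_card_of_injOn f (fun x hx => ?_) (hf.mono (filter_subset _ s))
        have := (Nat.div_eq_iff hm).1 (mem_filter.1 hx).2
        simp only [coe_Ico, Set.mem_Ico]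
        omega
    _ = m := by simp

lemma card_filter_eq_add_card_filter_eq_le_one {α β : Type*} [DecidableEq β] {s : Finset α}
    {g : α → β} {b b' : β} (hne : b ≠ b')
    (h : ∀ p ∈ s, ∀ q ∈ s, g p ∈ ({b, b'} : Finset β) → g q ∈ ({b, b'} : Finset β) → p = q) :
    #{p ∈ s | g p = b} + #{p ∈ s | g p = b'} ≤ 1 := by
  rw [← sum_pair (f := fun c => #{p ∈ s | g p = c}) hne, sum_card_fiberwise_eq_card_filter,
    card_le_one]
  intro p hp q hq
  exact h p (mem_filter.1 hp).1 q (mem_filter.1 hq).1 (mem_filter.1 hp).2 (mem_filter.1 hq).2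

lemma boxPaired_of_mem_transpose_pair {i j : ℕ} (hij : i ≠ j) {b b' : ℕ × ℕ}
    (hb : b ∈ ({(i, j), (j, i)} : Finset (ℕ × ℕ))) (hb' : b' ∈ ({(i, j), (j, i)} : Finset (ℕ × ℕ))) :
    boxPaired b b' := by
  simp only [mem_insert, mem_singleton] at hb hb'
  rcases hb with rfl | rfl <;> rcases hb' with rfl | rfl <;> simp [boxPaired, hij, hij.symm]

lemma boxPaired_of_mem_diag_pair {k : ℕ} {b b' : ℕ × ℕ}
    (hb : b ∈ ({(2 * k, 2 * k), (2 * k + 1, 2 * k + 1)} : Finset (ℕ × ℕ)))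
    (hb' : b' ∈ ({(2 * k, 2 * k), (2 * k + 1, 2 * k + 1)} : Finset (ℕ × ℕ))) :
    boxPaired b b' := by
  simp only [mem_insert, mem_singleton] at hb hb'
  left
  rcases hb with rfl | rfl <;> rcases hb' with rfl | rfl <;> omega

section BoxCount

variable {n m : ℕ} {T : Finset (Fin n × Fin n)}

def boxCount (m : ℕ) (T : Finset (Fin n × Fin n)) (b : ℕ × ℕ) : ℕ :=
  #{p ∈ T | boxOf m (p.1, p.2) = b}

lemma card_eq_sum_boxCount {k : ℕ} (hn : n ≤ k * m) (T : Finset (Fin n × Fin n)) :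
    #T = ∑ i ∈ range k, ∑ j ∈ range k, boxCount m T (i, j) := by
  rw [← sum_product (f := boxCount m T)]
  refine card_eq_sum_card_fiberwise fun p _ => ?_
  simp only [boxOf, coe_product, coe_range, Set.mem_prod, Set.mem_Iio]
  rw [mul_comm] at hn
  exact ⟨Nat.div_lt_of_lt_mul (p.1.isLt.trans_le hn), Nat.div_lt_of_lt_mul (p.2.isLt.trans_le hn)⟩

lemma sum_boxCount_row_le (hm : 0 < m) (hT : Set.InjOn (fun p : Fin n × Fin n => (p.1 : ℕ)) T) (i : ℕ)
    (t : Finset ℕ) : ∑ j ∈ t, boxCount m T (i, j) ≤ m :=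
  calc ∑ j ∈ t, boxCount m T (i, j)
      = ∑ j ∈ t, #{p ∈ {p ∈ T | (p.1 : ℕ) / m = i} | (p.2 : ℕ) / m = j} := by
        simp only [boxCount, boxOf, Prod.ext_iff, filter_filter]
    _ ≤ #{p ∈ T | (p.1 : ℕ) / m = i} := by
        rw [sum_card_fiberwise_eq_card_filter]
        exact card_filter_le _ _
    _ ≤ m := card_filter_div_eq_le hT hm i

lemma sum_boxCount_col_le (hm : 0 < m) (hT : Set.InjOn (fun p : Fin n × Fin n => (p.2 : ℕ)) T) (j : ℕ)
    (t : Finset ℕ) : ∑ i ∈ t, boxCount m T (i, j) ≤ m :=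
  calc ∑ i ∈ t, boxCount m T (i, j)
      = ∑ i ∈ t, #{p ∈ {p ∈ T | (p.2 : ℕ) / m = j} | (p.1 : ℕ) / m = i} := by
        simp only [boxCount, boxOf, Prod.ext_iff, filter_filter, and_comm]
    _ ≤ #{p ∈ T | (p.2 : ℕ) / m = j} := by
        rw [sum_card_fiberwise_eq_card_filter]
        exact card_filter_le _ _
    _ ≤ m := card_filter_div_eq_le hT hm j

end BoxCount

namespace IsTransversal

variable {n : ℕ} {S : Fin n × Fin n → Fin n} {T : Finset (Fin n × Fin n)}

lemma injOn_fst (hT : IsTransversal S T) : Set.InjOn (fun p : Fin n × Fin n => (p.1 : ℕ)) T :=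
  fun p hp q hq h => by_contra fun hpq => (hT p hp q hq hpq).1 (Fin.ext h)

lemma injOn_snd (hT : IsTransversal S T) : Set.InjOn (fun p : Fin n × Fin n => (p.2 : ℕ)) T :=
  fun p hp q hq h => by_contra fun hpq => (hT p hp q hq hpq).2.1 (Fin.ext h)

lemma eq_of_boxPaired {m : ℕ} (hT : IsTransversal S T)
    (hS : ∀ p q, boxPaired (boxOf m (p.1, p.2)) (boxOf m (q.1, q.2)) → S p = S q)
    {p q : Fin n × Fin n} (hp : p ∈ T) (hq : q ∈ T)
    (hpq : boxPaired (boxOf m (p.1, p.2)) (boxOf m (q.1, q.2))) : p = q :=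
  by_contra fun hne => (hT p hp q hq hne).2.2 (hS p q hpq)

end IsTransversal

theorem stmt3_general (m : ℕ)
    (S : Fin (2 * m ^ 2) × Fin (2 * m ^ 2) → Fin (2 * m ^ 2))
    (hS : ∀ p q : Fin (2 * m ^ 2) × Fin (2 * m ^ 2),
      S p = S q ↔ boxPaired (boxOf m ((p.1 : ℕ), (p.2 : ℕ))) (boxOf m ((q.1 : ℕ), (q.2 : ℕ)))) :
    ∀ T : Finset (Fin (2 * m ^ 2) × Fin (2 * m ^ 2)), IsTransversal S T →
      2 * T.card + m ≤ 2 * (2 * m ^ 2) := by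
  intro T hT
  rcases Nat.eq_zero_or_pos m with rfl | hm
  · simpa using T.card_le_univ
  have hpaired : ∀ p ∈ T, ∀ q ∈ T,
      boxPaired (boxOf m (p.1, p.2)) (boxOf m (q.1, q.2)) → p = q :=
    fun p hp q hq => hT.eq_of_boxPaired (fun p q => (hS p q).2) hp hq
  have hcount := two_mul_sum_add_le (N := fun i j => boxCount m T (i, j))
    (fun i => sum_boxCount_row_le hm hT.injOn_fst i _)
    (fun j => sum_boxCount_col_le hm hT.injOn_snd j _)
    (fun i j hij => card_filter_eq_add_card_filter_eq_le_one (by simp [hij])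
      fun p hp q hq hpb hqb => hpaired p hp q hq (boxPaired_of_mem_transpose_pair hij hpb hqb))
    (fun k => card_filter_eq_add_card_filter_eq_le_one (by simp)
      fun p hp q hq hpb hqb => hpaired p hp q hq (boxPaired_of_mem_diag_pair hpb hqb))
  rw [card_eq_sum_boxCount (k := 2 * m) (le_of_eq (by ring)) T]
  linarith

/-- For `n = 2m²`, the equi-`n`-square obtained from the paired `m×m` box construction
has no transversal of size greater than `n − m/2`, i.e. `2·|T| ≤ 2n − m` for every
transversal `T`: every transversal omits at least `m/2 = √n/(2√2)` symbols. -/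
theorem stmt3 (m : ℕ) (hm : 1 ≤ m)
    (S : Fin (2 * m ^ 2) × Fin (2 * m ^ 2) → Fin (2 * m ^ 2))
    (hS : ∀ p q : Fin (2 * m ^ 2) × Fin (2 * m ^ 2),
      S p = S q ↔ boxPaired (boxOf m ((p.1 : ℕ), (p.2 : ℕ))) (boxOf m ((q.1 : ℕ), (q.2 : ℕ))))
    (hequi : ∀ c : Fin (2 * m ^ 2),
      (Finset.univ.filter (fun p : Fin (2 * m ^ 2) × Fin (2 * m ^ 2) => S p = c)).card
        = 2 * m ^ 2) :
    ∀ T : Finset (Fin (2 * m ^ 2) × Fin (2 * m ^ 2)), IsTransversal S T →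
      2 * T.card + m ≤ 2 * (2 * m ^ 2) :=
  stmt3_general m S hS
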